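/- Ricci's condition for minimal surfaces: let U ⊆ ℂ be open and let (f, g) be Weierstrass data on U. Then for every z ∈ U, Δ(ln(−K))(z) = 4 K(z) λ(z)²; equivalently, the Laplace–Beltrami operator λ⁻²Δ of the induced metric applied to ln(−K) equals 4K. -/

import Mathlib

/-!
Near a point of `U`, `log (-K) = 2 (log 4 + log ‖g'‖ - log ‖f‖) - 4 log (1 + ‖g‖²)`. The first
summand is harmonic, `log ‖h‖` being harmonic for holomorphic `h` without zeros. For the second,
`Δ (log φ) = Δφ / φ - |∇φ|² / φ²` with `φ = c + ‖h‖²` and `h` holomorphic gives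
`Δ log (c + ‖h‖²) = 4 c ‖h'‖² / (c + ‖h‖²)²`, because `Δ ‖h‖² = 4 ‖h'‖²` and
`|∇ ‖h‖²|² = 4 ‖h‖² ‖h'‖²`. Hence `Δ log (-K) = -16 ‖g'‖² / (1 + ‖g‖²)²`, which is `4 K λ²`.
-/

/-- The flat Laplacian `Δ = ∂²/∂x² + ∂²/∂y²` on `ℂ ≃ ℝ²`, where the `x`-direction
is `1 : ℂ` and the `y`-direction is `I : ℂ`. -/
noncomputable def flatLaplacian (F : ℂ → ℝ) (z : ℂ) : ℝ :=
  fderiv ℝ (fun w => fderiv ℝ F w 1) z 1 +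
    fderiv ℝ (fun w => fderiv ℝ F w Complex.I) z Complex.I

open Complex InnerProductSpace Laplacian Topology Filter

theorem flatLaplacian_eq_laplacian {F : ℂ → ℝ} {z : ℂ} (hF : ContDiffAt ℝ 2 F z) :
    flatLaplacian F z = Δ F z := by
  have hF' : DifferentiableAt ℝ (fderiv ℝ F) z :=
    (hF.fderiv_right (m := 1) le_rfl).differentiableAt one_ne_zero
  simp [flatLaplacian, laplacian_eq_iteratedFDeriv_complexPlane, iteratedFDeriv_two_apply,
    fderiv_clm_apply hF' (differentiableAt_const _)]

theorem fderiv_fderiv_log_apply {E : Type*} [NormedAddCommGroup E] [NormedSpace ℝ E]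
    {φ : E → ℝ} {z : E} (hφ : ContDiffAt ℝ 2 φ z) (hz : φ z ≠ 0) (v v' : E) :
    fderiv ℝ (fun w => fderiv ℝ (fun u => Real.log (φ u)) w v) z v' =
      fderiv ℝ (fun w => fderiv ℝ φ w v) z v' / φ z -
        fderiv ℝ φ z v * fderiv ℝ φ z v' / φ z ^ 2 := by
  have hfirst : (fun w => fderiv ℝ (fun u => Real.log (φ u)) w v) =ᶠ[𝓝 z]
      fun w => (φ w)⁻¹ * fderiv ℝ φ w v := by
    filter_upwards [hφ.eventually (by simp), hφ.continuousAt.eventually_ne hz] with w hw hw0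
    simp [fderiv.log (hw.differentiableAt two_ne_zero) hw0]
  have hinv : HasFDerivAt (fun w => (φ w)⁻¹) (-(φ z ^ 2)⁻¹ • fderiv ℝ φ z) z :=
    (hasDerivAt_inv hz).comp_hasFDerivAt z (hφ.differentiableAt two_ne_zero).hasFDerivAt
  have hφv : DifferentiableAt ℝ (fun w => fderiv ℝ φ w v) z :=
    ((hφ.fderiv_right (m := 1) le_rfl).differentiableAt one_ne_zero).clm_apply
      (differentiableAt_const v)
  rw [hfirst.fderiv_eq, (hinv.fun_mul hφv.hasFDerivAt).fderiv]
  simp only [neg_smul, smul_neg, add_apply, smul_apply, smul_eq_mul, neg_apply]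
  field_simp
  ring

theorem DifferentiableAt.fderiv_norm_sq_apply {h : ℂ → ℂ} {w : ℂ} (hh : DifferentiableAt ℂ h w)
    (v : ℂ) : fderiv ℝ (fun u => ‖h u‖ ^ 2) w v = 2 * ⟪h w, deriv h w * v⟫_ℝ := by
  rw [(hh.hasDerivAt.hasFDerivAt.restrictScalars ℝ).norm_sq.fderiv]
  simp [-Complex.inner, mul_comm]

theorem AnalyticAt.fderiv_fderiv_norm_sq_apply {h : ℂ → ℂ} {z : ℂ} (hh : AnalyticAt ℂ h z)
    (v v' : ℂ) :
    fderiv ℝ (fun w => fderiv ℝ (fun u => ‖h u‖ ^ 2) w v) z v' =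
      2 * (⟪deriv h z * v', deriv h z * v⟫_ℝ + ⟪h z, deriv (deriv h) z * v' * v⟫_ℝ) := by
  have hfirst : (fun w => fderiv ℝ (fun u => ‖h u‖ ^ 2) w v) =ᶠ[𝓝 z]
      fun w => 2 * ⟪h w, deriv h w * v⟫_ℝ := by
    filter_upwards [hh.eventually_analyticAt] with w hw
    exact hw.differentiableAt.fderiv_norm_sq_apply v
  have hh' := hh.differentiableAt.hasDerivAt.hasFDerivAt.restrictScalars ℝ
  have hd' := (hh.deriv.differentiableAt.hasDerivAt.hasFDerivAt.restrictScalars ℝ).mul_const v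
  rw [hfirst.fderiv_eq, ((hh'.inner ℝ hd').const_mul 2).fderiv]
  simp [-Complex.inner, mul_comm, add_comm]

theorem AnalyticAt.flatLaplacian_log_add_norm_sq {h : ℂ → ℂ} {z : ℂ} (hh : AnalyticAt ℂ h z)
    {c : ℝ} (hc : c + ‖h z‖ ^ 2 ≠ 0) :
    flatLaplacian (fun w => Real.log (c + ‖h w‖ ^ 2)) z =
      4 * c * ‖deriv h z‖ ^ 2 / (c + ‖h z‖ ^ 2) ^ 2 := by
  have hφ : ContDiffAt ℝ 2 (fun w => c + ‖h w‖ ^ 2) z :=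
    contDiffAt_const.add (((hh.contDiffAt (n := 2)).restrict_scalars ℝ).norm_sq ℝ)
  simp only [flatLaplacian, fderiv_fderiv_log_apply hφ hc, fderiv_const_add,
    hh.fderiv_fderiv_norm_sq_apply, hh.differentiableAt.fderiv_norm_sq_apply]
  -- the `h''` terms cancel because `I * I = -1`, and `⟪h, h'⟫² + ⟪h, h' * I⟫² = ‖h‖² ‖h'‖²`
  simp only [← normSq_eq_norm_sq, normSq_apply, Complex.inner, mul_one, mul_re, conj_re, conj_im,
    mul_neg, sub_neg_eq_add, map_mul, conj_I, neg_re, I_re, mul_zero, I_im, zero_sub, zero_add,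
    neg_mul, mul_im, add_zero, neg_sub, neg_neg] at hc ⊢
  field_simp
  ring

theorem Real.log_sq_div_mul_sq {k a b s : ℝ} (hk : k ≠ 0) (ha : a ≠ 0) (hb : b ≠ 0)
    (hs : s ≠ 0) :
    Real.log ((k * a / (b * s ^ 2)) ^ 2) =
      2 * (Real.log k + Real.log a - Real.log b) - 4 * Real.log s := by
  rw [Real.log_pow, Real.log_div (by positivity) (by positivity), Real.log_mul hk ha,
    Real.log_mul hb (by positivity), Real.log_pow]
  push_cast
  ring

/-- Ricci's condition: for Weierstrass data `(f, g)` on an open set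
`U ⊆ ℂ`, with `λ = |f|(1 + |g|²)/2` and `K = −(4|g'| / (|f|(1 + |g|²)²))²`, one
has `Δ(ln(−K))(z) = 4 K(z) λ(z)²` for every `z ∈ U`; equivalently, the
Laplace–Beltrami operator `λ⁻²Δ` of the induced metric applied to `ln(−K)`
equals `4K`. -/
theorem ricci_condition
    (U : Set ℂ) (hU : IsOpen U)
    (f g : ℂ → ℂ)
    (hf : DifferentiableOn ℂ f U) (hg : DifferentiableOn ℂ g U)
    (hf0 : ∀ z ∈ U, f z ≠ 0) (hg' : ∀ z ∈ U, deriv g z ≠ 0)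
    (lam K : ℂ → ℝ)
    (hlam : ∀ z, lam z = ‖f z‖ * (1 + ‖g z‖ ^ 2) / 2)
    (hK : ∀ z, K z = -(4 * ‖deriv g z‖ /
      (‖f z‖ * (1 + ‖g z‖ ^ 2) ^ 2)) ^ 2) :
    ∀ z ∈ U,
      flatLaplacian (fun w => Real.log (-(K w))) z = 4 * K z * lam z ^ 2 ∧
      (lam z ^ 2)⁻¹ * flatLaplacian (fun w => Real.log (-(K w))) z = 4 * K z := by
  intro z hz
  have hfz : AnalyticAt ℂ f z := hf.analyticAt (hU.mem_nhds hz)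
  have hgz : AnalyticAt ℂ g z := hg.analyticAt (hU.mem_nhds hz)
  set H : ℂ → ℝ := fun w => Real.log 4 + Real.log ‖deriv g w‖ - Real.log ‖f w‖
  set L : ℂ → ℝ := fun w => Real.log (1 + ‖g w‖ ^ 2)
  have hH : HarmonicAt H z := ((harmonicAt_const _).add
    (hgz.deriv.harmonicAt_log_norm (hg' z hz))).sub (hfz.harmonicAt_log_norm (hf0 z hz))
  have hL : ContDiffAt ℝ 2 L z :=
    (contDiffAt_const.add (((hgz.contDiffAt (n := 2)).restrict_scalars ℝ).norm_sq ℝ)).log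
      (by positivity)
  have hlogK : (fun w => Real.log (-K w)) =ᶠ[𝓝 z] (2 : ℝ) • H - (4 : ℝ) • L := by
    filter_upwards [hfz.continuousAt.eventually_ne (hf0 z hz),
      hgz.deriv.continuousAt.eventually_ne (hg' z hz)] with w hfw hgw
    simp only [hK, neg_neg, Pi.sub_apply, Pi.smul_apply, smul_eq_mul, H, L]
    exact Real.log_sq_div_mul_sq four_ne_zero (norm_ne_zero_iff.2 hgw) (norm_ne_zero_iff.2 hfw)
      (by positivity)
  have h2H : ContDiffAt ℝ 2 ((2 : ℝ) • H) z := hH.1.const_smul (2 : ℝ)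
  have h4L : ContDiffAt ℝ 2 ((4 : ℝ) • L) z := hL.const_smul (4 : ℝ)
  have hΔ : flatLaplacian (fun w => Real.log (-K w)) z = -4 * flatLaplacian L z := by
    rw [flatLaplacian_eq_laplacian ((h2H.sub h4L).congr_of_eventuallyEq hlogK),
      (laplacian_congr_nhds hlogK).eq_of_nhds, h2H.laplacian_sub h4L,
      laplacian_smul _ hH.1, laplacian_smul _ hL, hH.2.eq_of_nhds, flatLaplacian_eq_laplacian hL]
    simp
  have hfz0 : ‖f z‖ ≠ 0 := norm_ne_zero_iff.2 (hf0 z hz)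
  have hlam0 : lam z ≠ 0 := by rw [hlam]; positivity
  have hmain : flatLaplacian (fun w => Real.log (-K w)) z = 4 * K z * lam z ^ 2 := by
    rw [hΔ, hgz.flatLaplacian_log_add_norm_sq (by positivity), hK, hlam]
    field_simp
    ring
  exact ⟨hmain, by rw [hmain]; field_simp⟩
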